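/- If a true model is an M0-composition-S0-variate OIS model and an iterative descriptor selection procedure iterates M' ≥ M0 times (so that the class of M0-composition descriptors is generated), and in every iteration m with 0 ≤ m ≤ M' the procedure satisfies the (1,S0)-OIS screening property with the current descriptor space treated as primary features, then the procedure satisfies the full OIS screening property, i.e., all true M0-composition-S0-variate descriptors survive the selection process. -/

import Mathlib

theorem Nat.forall_le_of_zero_of_succ {P : ℕ → Prop} {N : ℕ} (h0 : P 0)
    (hsucc : ∀ m, m ≤ N → P m → P (m + 1)) : ∀ m, m ≤ N → P m := by
  intro m
  induction m with
  | zero => exact fun _ => h0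
  | succ m ih => exact fun hm => hsucc m (by omega) (ih (by omega))

/-- Proposition 1 (OIS screening): if the true model is an `M0`-composition-`S0`-variate
OIS model with `K` true descriptors `f k` (active at composition level `M0`), the iterative
procedure iterates `M' ≥ M0` times, retains (`R m`) all active descriptors `A 0` at the start,
and in every iteration `m ≤ M'` satisfies the `(1,S0)`-OIS screening property (if all active
`m`-composition descriptors are retained, then all active `(m+1)`-composition descriptors,
obtained by applying one more operator, are retained), then every true descriptor survives
the selection process. -/
theorem ois_screening_of_iterative {D : Type*} (A R : ℕ → Set D)
    (M0 M' K : ℕ) (f : Fin K → D)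
    (hM : M0 ≤ M')
    (htrue : ∀ k, f k ∈ A M0)
    (h0 : A 0 ⊆ R 0)
    (hstep : ∀ m, m ≤ M' → A m ⊆ R m → A (m + 1) ⊆ R (m + 1)) :
    ∀ k, f k ∈ R M0 := by
  have hretained : A M0 ⊆ R M0 := Nat.forall_le_of_zero_of_succ h0 hstep M0 hM
  exact fun k => hretained (htrue k)
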